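/- arXiv:1209.3492 — 2 statements merged into one kernel-verified Lean document; each statement's English description precedes it below -/
import Mathlib

section
/- For every orthogonal transformation T : ℝⁿ → ℝⁿ and every ε > 0, there exists an orthogonal linear map A : ℝⁿ → ℝⁿ mapping ℚⁿ into ℚⁿ such that the operator norm ‖T − A‖ is less than ε. -/
/-!
By Cartan–Dieudonné every orthogonal map is a product of reflections
`x ↦ x - (2 ⟪v, x⟫ / ‖v‖²) v`. A reflection in a rational vector preserves `ℚⁿ`, and for `v ≠ 0`
the reflection depends continuously on `v` in operator norm; as `ℚⁿ` is dense, every reflection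
lies in the closure of the monoid of orthogonal maps preserving `ℚⁿ`. That closure is again a
monoid, hence contains every orthogonal map.
-/

open scoped RealInnerProductSpace

theorem LinearIsometryEquiv.coe_toContinuousLinearMap_mul {R E : Type*} [Semiring R]
    [SeminormedAddCommGroup E] [Module R E] (φ ψ : E ≃ₗᵢ[R] E) :
    ((φ * ψ : E ≃ₗᵢ[R] E) : E →L[R] E) = (φ : E →L[R] E) * ψ :=
  rfl

section Reflection

variable {E : Type*} [NormedAddCommGroup E] [InnerProductSpace ℝ E]

theorem reflection_orthogonalComplement_singleton_apply (v x : E) :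
    (ℝ ∙ v)ᗮ.reflection x = x - (2 * (⟪v, x⟫ / ‖v‖ ^ 2)) • v := by
  rw [Submodule.reflection_orthogonal_apply, Submodule.reflection_singleton_apply]
  simp only [RCLike.ofReal_real_eq_id, id_eq]
  module

theorem reflection_orthogonalComplement_singleton_eq (v : E) :
    ((ℝ ∙ v)ᗮ.reflection : E →L[ℝ] E) = 1 - (2 / ‖v‖ ^ 2) • (innerSL ℝ v).smulRight v := by
  ext x
  simp [reflection_orthogonalComplement_singleton_apply]
  module

theorem reflection_orthogonalComplement_singleton_zero :
    ((ℝ ∙ (0 : E))ᗮ.reflection : E →L[ℝ] E) = 1 :=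
  ContinuousLinearMap.ext fun x => by
    simpa using reflection_orthogonalComplement_singleton_apply (0 : E) x

theorem continuousAt_reflection_orthogonalComplement_singleton {v : E} (hv : v ≠ 0) :
    ContinuousAt (fun w : E => ((ℝ ∙ w)ᗮ.reflection : E →L[ℝ] E)) v := by
  simp_rw [reflection_orthogonalComplement_singleton_eq]
  have hscalar : ContinuousAt (fun w : E => 2 / ‖w‖ ^ 2) v := by fun_prop (disch := positivity)
  have hrank_one : Continuous fun w : E => (innerSL ℝ w).smulRight w := by fun_prop
  exact continuousAt_const.sub (hscalar.smul hrank_one.continuousAt)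

end Reflection

section Rational

variable {ι : Type*}

def IsRatVec (x : EuclideanSpace ℝ ι) : Prop := ∀ i, ∃ r : ℚ, x i = r

theorem dense_setOf_isRatVec : Dense {x : EuclideanSpace ℝ ι | IsRatVec x} := by
  have hset : {x : EuclideanSpace ℝ ι | IsRatVec x} =
      EuclideanSpace.equiv ι ℝ ⁻¹' Set.univ.pi fun _ => Set.range ((↑) : ℚ → ℝ) := by
    ext x
    simp [IsRatVec, eq_comm]
  rw [hset]
  exact (dense_pi _ fun _ _ => Rat.denseRange_cast).preimage
    (EuclideanSpace.equiv ι ℝ).toHomeomorph.isOpenMap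

variable [Fintype ι]

theorem IsRatVec.exists_inner_eq {x y : EuclideanSpace ℝ ι} (hx : IsRatVec x)
    (hy : IsRatVec y) : ∃ q : ℚ, ⟪x, y⟫ = q := by
  choose p hp using hx
  choose q hq using hy
  refine ⟨∑ i, q i * p i, ?_⟩
  simp [PiLp.inner_apply, hp, hq]

theorem IsRatVec.reflection {w x : EuclideanSpace ℝ ι} (hw : IsRatVec w) (hx : IsRatVec x) :
    IsRatVec ((ℝ ∙ w)ᗮ.reflection x) := by
  obtain ⟨a, ha⟩ := hw.exists_inner_eq hx
  obtain ⟨b, hb⟩ := hw.exists_inner_eq hw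
  intro i
  obtain ⟨xi, hxi⟩ := hx i
  obtain ⟨wi, hwi⟩ := hw i
  refine ⟨xi - 2 * (a / b) * wi, ?_⟩
  have hnorm : ‖w‖ ^ 2 = b := by rw [← real_inner_self_eq_norm_sq, hb]
  simp [reflection_orthogonalComplement_singleton_apply, ha, hnorm, hxi, hwi]

variable (ι) in
def rationalIsometries : Submonoid (EuclideanSpace ℝ ι →L[ℝ] EuclideanSpace ℝ ι) where
  carrier := {A | (∀ x, ‖A x‖ = ‖x‖) ∧ ∀ x, IsRatVec x → IsRatVec (A x)}
  mul_mem' hA hB := ⟨fun x => (hA.1 _).trans (hB.1 x), fun x hx => hA.2 _ (hB.2 x hx)⟩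
  one_mem' := ⟨fun _ => rfl, fun _ hx => hx⟩

theorem reflection_mem_rationalIsometries {w : EuclideanSpace ℝ ι} (hw : IsRatVec w) :
    ((ℝ ∙ w)ᗮ.reflection : EuclideanSpace ℝ ι →L[ℝ] EuclideanSpace ℝ ι) ∈ rationalIsometries ι :=
  ⟨fun x => by simp, fun x hx => by simpa using hw.reflection hx⟩

theorem reflection_mem_topologicalClosure_rationalIsometries (v : EuclideanSpace ℝ ι) :
    ((ℝ ∙ v)ᗮ.reflection : EuclideanSpace ℝ ι →L[ℝ] EuclideanSpace ℝ ι) ∈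
      (rationalIsometries ι).topologicalClosure := by
  rcases eq_or_ne v 0 with rfl | hv
  · rw [reflection_orthogonalComplement_singleton_zero]
    exact one_mem _
  · rw [← SetLike.mem_coe, Submonoid.coe_topologicalClosure]
    have hlim := (continuousAt_reflection_orthogonalComplement_singleton hv).continuousWithinAt
      |>.mem_closure_image (dense_setOf_isRatVec v)
    refine closure_mono ?_ hlim
    rintro _ ⟨w, hw, rfl⟩
    exact reflection_mem_rationalIsometries hw

theorem LinearIsometryEquiv.coe_mem_topologicalClosure_rationalIsometries
    (φ : EuclideanSpace ℝ ι ≃ₗᵢ[ℝ] EuclideanSpace ℝ ι) :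
    (φ : EuclideanSpace ℝ ι →L[ℝ] EuclideanSpace ℝ ι) ∈
      (rationalIsometries ι).topologicalClosure := by
  obtain ⟨l, -, rfl⟩ := φ.reflections_generate_dim
  induction l with
  | nil => exact one_mem _
  | cons v l ih =>
    rw [List.map_cons, List.prod_cons, LinearIsometryEquiv.coe_toContinuousLinearMap_mul]
    exact mul_mem (reflection_mem_topologicalClosure_rationalIsometries v) ih

end Rational

/-- Every orthogonal transformation of ℝⁿ can be approximated arbitrarily well in
operator norm by an orthogonal transformation mapping ℚⁿ into ℚⁿ. -/
theorem orthogonal_approx_rational (n : ℕ)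
    (T : EuclideanSpace ℝ (Fin n) ≃ₗ[ℝ] EuclideanSpace ℝ (Fin n))
    (hT : ∀ x y : EuclideanSpace ℝ (Fin n), ⟪T x, T y⟫ = ⟪x, y⟫)
    (ε : ℝ) (hε : 0 < ε) :
    ∃ A : EuclideanSpace ℝ (Fin n) ≃ₗ[ℝ] EuclideanSpace ℝ (Fin n),
      (∀ x y : EuclideanSpace ℝ (Fin n), ⟪A x, A y⟫ = ⟪x, y⟫) ∧
      (∀ x : EuclideanSpace ℝ (Fin n), (∀ i, ∃ r : ℚ, x i = (r : ℝ)) →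
        (∀ i, ∃ r : ℚ, A x i = (r : ℝ))) ∧
      ‖T.toLinearMap.toContinuousLinearMap - A.toLinearMap.toContinuousLinearMap‖ < ε := by
  obtain ⟨A, ⟨hA_norm, hA_rat⟩, hTA⟩ := Metric.mem_closure_iff.1
    (T.isometryOfInner hT).coe_mem_topologicalClosure_rationalIsometries ε hε
  let Aᵢ : EuclideanSpace ℝ (Fin n) ≃ₗᵢ[ℝ] EuclideanSpace ℝ (Fin n) :=
    LinearIsometry.toLinearIsometryEquiv ⟨A.toLinearMap, hA_norm⟩ rfl
  exact ⟨Aᵢ.toLinearEquiv, Aᵢ.inner_map_map, hA_rat, by rwa [← dist_eq_norm]⟩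
end

section
/- Every Lorentz transformation of ℝᵈ (linear map preserving the quadratic form x₁² − x₂² − ··· − x_d²) can be approximated arbitrarily well in operator norm by a Lorentz transformation that maps ℚᵈ into ℚᵈ: for every Lorentz transformation L and every ε > 0 there exists a Lorentz transformation L* with L*(ℚᵈ) ⊆ ℚᵈ and ‖L − L*‖ < ε. -/
/-!
Let `B` be the Minkowski bilinear form. Every `B`-isometry is a product of reflections
`x ↦ x - (2 B(x,v) / B(v,v)) v` in anisotropic vectors `v`: an isometry `L` fixing
`e₀, …, e_{k-1}` is composed with the reflection in `L e_k - e_k`, or, when that vector is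
isotropic, with the reflections in `L e_k + e_k` and `e_k`, to fix `e_k` as well.
A reflection depends continuously on `v` where `B(v,v) ≠ 0`, and since `B` has rational
coefficients, a reflection in a rational vector maps `ℚᵈ` into itself. Replacing each `v` by a
nearby rational vector therefore approximates `L` in operator norm by a rational Lorentz
transformation.
-/

/-- The Minkowski quadratic form x₁² − x₂² − ⋯ − x_d². -/
noncomputable def mink (d : ℕ) (x : EuclideanSpace ℝ (Fin (d + 2))) : ℝ :=
  x 0 ^ 2 - ∑ i ∈ Finset.univ.filter (fun i => i ≠ (0 : Fin (d + 2))), x i ^ 2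

open Set

noncomputable def LinearEquiv.toContinuousLinearMapHom {𝕜 : Type*} [NontriviallyNormedField 𝕜]
    [CompleteSpace 𝕜] (V : Type*) [NormedAddCommGroup V] [NormedSpace 𝕜 V]
    [FiniteDimensional 𝕜 V] : (V ≃ₗ[𝕜] V) →* (V →L[𝕜] V) :=
  (Module.End.toContinuousLinearMap V).toMonoidHom.comp
    LinearEquiv.automorphismGroup.toLinearMapMonoidHom

namespace LinearMap.BilinForm

variable {K V : Type*} [Field K] [AddCommGroup V] [Module K V] (B : LinearMap.BilinForm K V)

lemma involutive_preReflection (v : V) :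
    Function.Involutive (Module.preReflection v ((2 / B v v) • B.flip v)) := by
  by_cases hv : B v v = 0
  · intro x
    simp [Module.preReflection_apply, hv]
  · exact Module.involutive_preReflection (by simp [hv])

/-- The reflection in the hyperplane `B`-orthogonal to `v`; for isotropic `v` (where `2 / B v v`
is `0`) it is the identity. -/
noncomputable def reflection (v : V) : V ≃ₗ[K] V :=
  .ofInvolutive _ (B.involutive_preReflection v)

variable {B}

lemma reflection_apply (v x : V) : B.reflection v x = x - (2 / B v v * B x v) • v := by
  simp [reflection, Module.preReflection_apply]

@[simp]
lemma reflection_inv (v : V) : (B.reflection v)⁻¹ = B.reflection v :=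
  inv_eq_of_mul_eq_one_left (LinearEquiv.ext (B.involutive_preReflection v))

lemma reflection_apply_of_isOrtho {v x : V} (h : B x v = 0) : B.reflection v x = x := by
  simp [reflection_apply, h]

lemma reflection_apply_self {v : V} (hv : B v v ≠ 0) : B.reflection v v = -v := by
  rw [reflection_apply, div_mul_cancel₀ _ hv, two_smul]; abel

lemma isOrthogonal_reflection (hB : B.IsSymm) (v : V) :
    LinearMap.IsOrthogonal B (B.reflection v) := by
  intro x y
  by_cases hv : B v v = 0
  · simp [reflection_apply, hv]
  · simp only [reflection_apply, map_sub, map_smul, LinearMap.sub_apply, LinearMap.smul_apply,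
      smul_eq_mul, hB.eq v y]
    field_simp
    ring

lemma reflection_sub_apply (hB : B.IsSymm) {x y : V} (hxy : B x x = B y y)
    (h : B (y - x) (y - x) ≠ 0) : B.reflection (y - x) y = x := by
  have hcoef : 2 / B (y - x) (y - x) * B y (y - x) = 1 := by
    rw [div_mul_eq_mul_div, div_eq_one_iff_eq h]
    simp only [map_sub, LinearMap.sub_apply, hB.eq x y, hxy]
    ring
  rw [reflection_apply, hcoef, one_smul, sub_sub_cancel]

variable (B) in
def reflectionGroup (D : Set V) : Subgroup (V ≃ₗ[K] V) :=
  Subgroup.closure (B.reflection '' D)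

lemma isOrthogonal_of_mem_reflectionGroup (hB : B.IsSymm) {D : Set V} {g : V ≃ₗ[K] V}
    (hg : g ∈ B.reflectionGroup D) : LinearMap.IsOrthogonal B g := by
  induction hg using Subgroup.closure_induction'' with
  | mem _ h | inv_mem _ h =>
    obtain ⟨v, -, rfl⟩ := h
    simpa using isOrthogonal_reflection hB v
  | one => exact fun _ _ => rfl
  | mul g h _ _ hg hh => exact fun x y => (hg _ _).trans (hh x y)

lemma exists_mem_reflectionGroup_apply_eq [NeZero (2 : K)] (hB : B.IsSymm) {x y : V}
    (hx : B x x ≠ 0) (hxy : B x x = B y y) :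
    ∃ g ∈ B.reflectionGroup {v | B v v ≠ 0}, g y = x ∧ ∀ z, B z x = 0 → B z y = 0 → g z = z := by
  by_cases h : B (y - x) (y - x) = 0
  · have h' : B (y - -x) (y - -x) ≠ 0 := by
      have hpar : B (y - x) (y - x) + B (y - -x) (y - -x) = 2 * 2 * B x x := by
        simp only [map_sub, map_neg, LinearMap.sub_apply, LinearMap.neg_apply, hB.eq x y, hxy]
        ring
      rw [h, zero_add] at hpar
      exact hpar ▸ mul_ne_zero (mul_ne_zero two_ne_zero two_ne_zero) hx
    refine ⟨B.reflection x * B.reflection (y - -x),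
      mul_mem (Subgroup.subset_closure ⟨x, hx, rfl⟩) (Subgroup.subset_closure ⟨_, h', rfl⟩), ?_, ?_⟩
    · rw [LinearEquiv.mul_apply, reflection_sub_apply hB (by simpa using hxy) h', map_neg,
        reflection_apply_self hx, neg_neg]
    · intro z hzx hzy
      rw [LinearEquiv.mul_apply, reflection_apply_of_isOrtho (x := z) (by simp [hzx, hzy]),
        reflection_apply_of_isOrtho hzx]
  · exact ⟨B.reflection (y - x), Subgroup.subset_closure ⟨_, h, rfl⟩,
      reflection_sub_apply hB hxy h,
      fun z hzx hzy => reflection_apply_of_isOrtho (by simp [hzx, hzy])⟩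

/-- A weak form of the Cartan–Dieudonné theorem. -/
theorem mem_reflectionGroup_of_isOrthogonal {ι : Type*} [Finite ι] [NeZero (2 : K)]
    (hB : B.IsSymm) (b : Module.Basis ι K V) (hb : B.iIsOrtho b) (hbB : ∀ i, B (b i) (b i) ≠ 0)
    {L : V ≃ₗ[K] V} (hL : LinearMap.IsOrthogonal B L) : L ∈ B.reflectionGroup {v | B v v ≠ 0} := by
  classical
  cases nonempty_fintype ι
  suffices ∀ s : Finset ι, ∀ L : V ≃ₗ[K] V, LinearMap.IsOrthogonal B L →
      (∀ i ∉ s, L (b i) = b i) → L ∈ B.reflectionGroup {v | B v v ≠ 0} from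
    this Finset.univ L hL (by simp)
  intro s
  induction s using Finset.induction_on with
  | empty =>
    intro L _ hfix
    rw [b.ext' (f₁ := L) (f₂ := 1) (by simpa using hfix)]
    exact one_mem _
  | insert k s _ ih =>
    intro L hL hfix
    obtain ⟨g, hg, hgk, hgfix⟩ := exists_mem_reflectionGroup_apply_eq hB (hbB k) (hL _ _).symm
    have hgL : g * L ∈ B.reflectionGroup {v | B v v ≠ 0} := by
      refine ih _ (fun x y => (isOrthogonal_of_mem_reflectionGroup hB hg _ _).trans (hL x y)) ?_
      intro i hi
      by_cases hik : i = k
      · subst hik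
        exact hgk
      · have hLi : L (b i) = b i := hfix i (by simp [hik, hi])
        rw [LinearEquiv.mul_apply, hLi]
        exact hgfix _ (hb hik) (by rw [← hLi, hL]; exact hb hik)
    simpa using mul_mem (inv_mem hg) hgL

section Topology

open LinearEquiv (toContinuousLinearMapHom)

variable {𝕜 V : Type*} [NontriviallyNormedField 𝕜] [CompleteSpace 𝕜] [NormedAddCommGroup V]
  [NormedSpace 𝕜 V] [FiniteDimensional 𝕜 V] {B : LinearMap.BilinForm 𝕜 V}

variable (B) in
lemma continuous_apply_self : Continuous fun v => B v v :=
  ((LinearMap.toContinuousLinearMap : (V →ₗ[𝕜] 𝕜) ≃ₗ[𝕜] _).toLinearMap ∘ₗ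
    B).continuous_of_finiteDimensional.clm_apply continuous_id

lemma continuousAt_reflection {v : V} (hv : B v v ≠ 0) :
    ContinuousAt (fun w => toContinuousLinearMapHom V (B.reflection w)) v := by
  refine continuousAt_clm_apply.mpr fun y => ?_
  change ContinuousAt (fun w => B.reflection w y) v
  simp only [reflection_apply]
  exact continuousAt_const.sub (((continuousAt_const.div (continuous_apply_self B).continuousAt
    hv).mul (B y).continuous_of_finiteDimensional.continuousAt).smul continuousAt_id)

theorem toContinuousLinearMapHom_mem_closure_reflectionGroup {D : Set V} (hD : Dense D)
    {g : V ≃ₗ[𝕜] V} (hg : g ∈ B.reflectionGroup {v | B v v ≠ 0}) :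
    toContinuousLinearMapHom V g ∈
      closure (toContinuousLinearMapHom V '' B.reflectionGroup D) := by
  set M := ((B.reflectionGroup D).toSubmonoid.map
    (toContinuousLinearMapHom V)).topologicalClosure
  have hrefl : ∀ v, B v v ≠ 0 → toContinuousLinearMapHom V (B.reflection v) ∈ M := by
    intro v hv
    refine closure_mono ?_ (mem_closure_image
      (f := fun w => toContinuousLinearMapHom V (B.reflection w)) (continuousAt_reflection hv)
      (hD v))
    rintro _ ⟨w, hw, rfl⟩
    exact ⟨_, Subgroup.subset_closure ⟨w, hw, rfl⟩, rfl⟩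
  change toContinuousLinearMapHom V g ∈ M
  induction hg using Subgroup.closure_induction'' with
  | mem _ h | inv_mem _ h =>
    obtain ⟨v, hv, rfl⟩ := h
    simpa using hrefl v hv
  | one => simp
  | mul g h _ _ hg hh => simpa using M.mul_mem hg hh

end Topology

end LinearMap.BilinForm

namespace EuclideanSpace

variable {ι : Type*}

variable (ι) in
def rationalPoints : Set (EuclideanSpace ℝ ι) :=
  {x | ∀ i, ∃ r : ℚ, x i = r}

lemma dense_rationalPoints : Dense (rationalPoints ι) := by
  have : Dense (univ.pi fun _ : ι => range ((↑) : ℚ → ℝ)) :=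
    dense_pi _ fun _ _ => Rat.denseRange_cast
  simpa [rationalPoints, Set.pi, Set.preimage, eq_comm] using
    this.preimage (EuclideanSpace.equiv ι ℝ).toHomeomorph.isOpenMap

variable [Fintype ι]

noncomputable def diagonalBilinForm (w : ι → ℚ) : LinearMap.BilinForm ℝ (EuclideanSpace ℝ ι) :=
  LinearMap.mk₂ ℝ (fun x y => ∑ i, (w i : ℝ) * x i * y i)
    (fun _ _ _ => by simp only [PiLp.add_apply, mul_add, add_mul, Finset.sum_add_distrib])
    (fun _ _ _ => by
      simp only [PiLp.smul_apply, smul_eq_mul, Finset.mul_sum]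
      exact Finset.sum_congr rfl fun _ _ => by ring)
    (fun _ _ _ => by simp only [PiLp.add_apply, mul_add, Finset.sum_add_distrib])
    (fun _ _ _ => by
      simp only [PiLp.smul_apply, smul_eq_mul, Finset.mul_sum]
      exact Finset.sum_congr rfl fun _ _ => by ring)

variable {w : ι → ℚ}

lemma diagonalBilinForm_apply (x y : EuclideanSpace ℝ ι) :
    diagonalBilinForm w x y = ∑ i, (w i : ℝ) * x i * y i :=
  rfl

lemma isSymm_diagonalBilinForm : (diagonalBilinForm w).IsSymm :=
  ⟨fun x y => by simp only [diagonalBilinForm_apply, mul_right_comm]⟩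

lemma exists_rat_diagonalBilinForm_eq {x y : EuclideanSpace ℝ ι} (hx : x ∈ rationalPoints ι)
    (hy : y ∈ rationalPoints ι) : ∃ r : ℚ, diagonalBilinForm w x y = r := by
  choose a ha using hx
  choose b hb using hy
  exact ⟨∑ i, w i * a i * b i, by simp [diagonalBilinForm_apply, ha, hb]⟩

lemma mapsTo_reflection_rationalPoints {v : EuclideanSpace ℝ ι} (hv : v ∈ rationalPoints ι) :
    MapsTo ((diagonalBilinForm w).reflection v) (rationalPoints ι) (rationalPoints ι) := by
  intro x hx i
  obtain ⟨a, ha⟩ := exists_rat_diagonalBilinForm_eq (w := w) hv hv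
  obtain ⟨b, hb⟩ := exists_rat_diagonalBilinForm_eq (w := w) hx hv
  obtain ⟨xi, hxi⟩ := hx i
  obtain ⟨vi, hvi⟩ := hv i
  exact ⟨xi - 2 / a * b * vi, by simp [LinearMap.BilinForm.reflection_apply, ha, hb, hxi, hvi]⟩

lemma mapsTo_rationalPoints_of_mem_reflectionGroup {g : EuclideanSpace ℝ ι ≃ₗ[ℝ] EuclideanSpace ℝ ι}
    (hg : g ∈ (diagonalBilinForm w).reflectionGroup (rationalPoints ι)) :
    MapsTo g (rationalPoints ι) (rationalPoints ι) := by
  induction hg using Subgroup.closure_induction'' with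
  | mem _ h | inv_mem _ h =>
    obtain ⟨v, hv, rfl⟩ := h
    simpa using mapsTo_reflection_rationalPoints hv
  | one => exact mapsTo_id _
  | mul g h _ _ hg hh => exact hg.comp hh

variable [DecidableEq ι]

lemma iIsOrtho_diagonalBilinForm_basisFun :
    (diagonalBilinForm w).iIsOrtho (PiLp.basisFun 2 ℝ ι) := by
  intro i j hij
  show diagonalBilinForm w _ _ = 0
  simp [diagonalBilinForm_apply, hij.symm]

lemma diagonalBilinForm_basisFun_self (i : ι) :
    diagonalBilinForm w (PiLp.basisFun 2 ℝ ι i) (PiLp.basisFun 2 ℝ ι i) = w i := by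
  simp [diagonalBilinForm_apply]

end EuclideanSpace

open LinearMap.BilinForm EuclideanSpace

noncomputable def minkowskiForm (d : ℕ) : LinearMap.BilinForm ℝ (EuclideanSpace ℝ (Fin (d + 2))) :=
  diagonalBilinForm fun i => if i = 0 then 1 else -1

lemma mink_eq_minkowskiForm (d : ℕ) (x : EuclideanSpace ℝ (Fin (d + 2))) :
    mink d x = minkowskiForm d x x := by
  have hspace : ∀ i ∈ Finset.univ.erase 0,
      ((if i = 0 then 1 else -1 : ℚ) : ℝ) * x i * x i = -(x i ^ 2) :=
    fun i hi => by simp [Finset.ne_of_mem_erase hi, sq]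
  rw [mink, minkowskiForm, diagonalBilinForm_apply, Finset.filter_ne',
    ← Finset.add_sum_erase _ _ (Finset.mem_univ 0), Finset.sum_congr rfl hspace,
    Finset.sum_neg_distrib]
  simp [sq, sub_eq_add_neg]

/-- Every Lorentz transformation of ℝᵈ can be approximated arbitrarily well in
operator norm by a Lorentz transformation mapping ℚᵈ into ℚᵈ. -/
theorem lorentz_approx_rational (d : ℕ)
    (L : EuclideanSpace ℝ (Fin (d + 2)) ≃ₗ[ℝ] EuclideanSpace ℝ (Fin (d + 2)))
    (hL : ∀ x, mink d (L x) = mink d x) (ε : ℝ) (hε : 0 < ε) :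
    ∃ Ls : EuclideanSpace ℝ (Fin (d + 2)) ≃ₗ[ℝ] EuclideanSpace ℝ (Fin (d + 2)),
      (∀ x, mink d (Ls x) = mink d x) ∧
      (∀ x : EuclideanSpace ℝ (Fin (d + 2)), (∀ i, ∃ r : ℚ, x i = (r : ℝ)) →
        (∀ i, ∃ r : ℚ, Ls x i = (r : ℝ))) ∧
      ‖L.toLinearMap.toContinuousLinearMap - Ls.toLinearMap.toContinuousLinearMap‖ < ε := by
  have hB : (minkowskiForm d).IsSymm := isSymm_diagonalBilinForm
  have hLB : LinearMap.IsOrthogonal (minkowskiForm d) L :=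
    LinearMap.isOrthogonal_of_forall_apply_same L
      (IsRegular.of_ne_zero (two_ne_zero : (2 : ℝ) ≠ 0)).left (isSymm_iff.mp hB)
      fun x => by simpa only [mink_eq_minkowskiForm] using hL x
  have hLgen : L ∈ (minkowskiForm d).reflectionGroup {v | minkowskiForm d v v ≠ 0} :=
    mem_reflectionGroup_of_isOrthogonal hB (PiLp.basisFun 2 ℝ _)
      iIsOrtho_diagonalBilinForm_basisFun (fun i => by
        rw [minkowskiForm, diagonalBilinForm_basisFun_self]
        split_ifs <;> norm_num) hLB
  obtain ⟨_, ⟨g, hg, rfl⟩, hgL⟩ := Metric.mem_closure_iff.mp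
    (toContinuousLinearMapHom_mem_closure_reflectionGroup dense_rationalPoints hLgen) ε hε
  refine ⟨g, fun x => ?_, fun x hx => mapsTo_rationalPoints_of_mem_reflectionGroup hg hx,
    by rwa [← dist_eq_norm]⟩
  simpa only [mink_eq_minkowskiForm] using isOrthogonal_of_mem_reflectionGroup hB hg x x
end
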